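/- arXiv:0710.1525 — 6 statements merged into one kernel-verified Lean document; each statement's English description precedes it below -/
import Mathlib

section
/- Let A and B be antichains of intervals over a finite totally ordered set. The meet A ∧ B in the lattice of antichains equals the set of inclusion-minimal intervals among all intervals spanned by a pair (I, J) with I ∈ A and J ∈ B, where the spanned interval is the least interval containing both I and J. -/
def IsInterval {O : Type*} [LinearOrder O] (X : Set O) : Prop :=
  ∀ x ∈ X, ∀ y ∈ X, ∀ z, x < z → z < y → z ∈ X

def spanSet {O : Type*} [LinearOrder O] (I J : Set O) : Set O :=
  {z | ∃ x ∈ I ∪ J, ∃ y ∈ I ∪ J, x ≤ z ∧ z ≤ y}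

lemma span_isInterval {O : Type*} [LinearOrder O] (I J : Set O) :
    IsInterval (spanSet I J) := by
  rintro a ⟨x, hx, y, hy, hxa, hay⟩ b ⟨x', hx', y', hy', hxb', hby'⟩ z haz hzb
  exact ⟨x, hx, y', hy', hxa.trans haz.le, hzb.le.trans hby'⟩

lemma subset_span_left {O : Type*} [LinearOrder O] (I J : Set O) : I ⊆ spanSet I J :=
  fun x hx => ⟨x, Or.inl hx, x, Or.inl hx, le_refl x, le_refl x⟩

lemma subset_span_right {O : Type*} [LinearOrder O] (I J : Set O) : J ⊆ spanSet I J :=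
  fun x hx => ⟨x, Or.inr hx, x, Or.inr hx, le_refl x, le_refl x⟩

lemma span_subset {O : Type*} [LinearOrder O] {I J K : Set O} (hK : IsInterval K)
    (hI : I ⊆ K) (hJ : J ⊆ K) : spanSet I J ⊆ K := by
  rintro z ⟨x, hx, y, hy, hxz, hzy⟩
  have hxK : x ∈ K := hx.elim (hI ·) (hJ ·)
  have hyK : y ∈ K := hy.elim (hI ·) (hJ ·)
  rcases eq_or_lt_of_le hxz with rfl | h1
  · exact hxK
  rcases eq_or_lt_of_le hzy with rfl | h2
  · exact hyK
  exact hK x hxK y hyK z h1 h2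

def genIdeal {O : Type*} [LinearOrder O] (A : Set (Set O)) : Set (Set O) :=
  {I | IsInterval I ∧ ∃ J ∈ A, J ⊆ I}

/-- the meet of antichains `A` and `B` (the inclusion-minimal,
i.e. reverse-inclusion-maximal, elements of the intersection of their generated
ideals) is the set of inclusion-minimal intervals among the spans of pairs from
`A × B`. -/
theorem stmt5 {O : Type*} [LinearOrder O] [Fintype O] (A B : Set (Set O))
    (hA : ∀ I ∈ A, IsInterval I ∧ I.Nonempty) (hB : ∀ I ∈ B, IsInterval I ∧ I.Nonempty)
    (hAa : IsAntichain (· ⊆ ·) A) (hBa : IsAntichain (· ⊆ ·) B) :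
    {I ∈ genIdeal A ∩ genIdeal B | ∀ K ∈ genIdeal A ∩ genIdeal B, K ⊆ I → K = I}
      = {S ∈ {S : Set O | ∃ I ∈ A, ∃ J ∈ B, S = spanSet I J} |
          ∀ T ∈ {S : Set O | ∃ I ∈ A, ∃ J ∈ B, S = spanSet I J}, T ⊆ S → T = S} := by
  have hSG : ∀ S : Set O, (∃ I ∈ A, ∃ J ∈ B, S = spanSet I J) →
      S ∈ genIdeal A ∩ genIdeal B := by
    rintro S ⟨I, hI, J, hJ, rfl⟩
    exact ⟨⟨span_isInterval I J, I, hI, subset_span_left I J⟩,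
      ⟨span_isInterval I J, J, hJ, subset_span_right I J⟩⟩
  have hGS : ∀ K ∈ genIdeal A ∩ genIdeal B,
      ∃ S, (∃ I ∈ A, ∃ J ∈ B, S = spanSet I J) ∧ S ⊆ K := by
    rintro K ⟨⟨hKint, I, hI, hIK⟩, ⟨_, J, hJ, hJK⟩⟩
    exact ⟨spanSet I J, ⟨I, hI, J, hJ, rfl⟩, span_subset hKint hIK hJK⟩
  ext X
  simp only [Set.mem_setOf_eq, Set.mem_sep_iff]
  constructor
  · rintro ⟨hXG, hXmin⟩
    obtain ⟨S, hS, hSX⟩ := hGS X hXG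
    have hSX' : S = X := hXmin S (hSG S hS) hSX
    refine ⟨hSX' ▸ hS, fun T hT hTX => hXmin T (hSG T hT) hTX⟩
  · rintro ⟨hXS, hXmin⟩
    refine ⟨hSG X hXS, fun K hK hKX => ?_⟩
    obtain ⟨T, hT, hTK⟩ := hGS K hK
    have := hXmin T hT (hTK.trans hKX)
    exact subset_antisymm hKX (this ▸ hTK)
end

section
/- Let A₀, ..., A_{m−1} be antichains of nonempty intervals of a finite totally ordered set. Every interval of the form I₀ ∪ I₁ ∪ ⋯ ∪ I_{m−1} with I_i ∈ A_i and I_{i−1} ≪ I_i for 0 < i < m (and where the union is an interval) is minimal under inclusion among all such intervals; i.e., the set of such concatenations forms an antichain. Here I ≪ J means every element of I is strictly less than every element of J. -/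
/-- `I ≪ J`: every element of `I` is strictly less than every element of `J`. -/
def Ll {O : Type*} [LinearOrder O] (I J : Set O) : Prop :=
  ∀ x ∈ I, ∀ y ∈ J, x < y

/-!
Let `I₀ ∪ ⋯ ∪ I_{m−1} ⊆ J₀ ∪ ⋯ ∪ J_{m−1}` be two such concatenations. Every point of `I_i` lies in
some `J_j`, and `j` depends monotonically on the point because the `J`'s are ordered by `≪`.
Inducting upwards, `j ≥ i`: if a point of `I_{i+1}` were in `J_i`, all of `I_i` (lying below it
and, by induction, in `J_{≥ i}`) would be inside `J_i`, so `I_i = J_i` by the antichain property,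
and `I_i ≪ I_{i+1}` is violated. Dually `j ≤ i`, so `I_i ⊆ J_i`, whence `I_i = J_i` for all `i`.
-/

section

variable {O : Type*} [LinearOrder O] {m : ℕ}

theorem Ll.trans {I J K : Set O} (hIJ : Ll I J) (hJK : Ll J K) (hJ : J.Nonempty) : Ll I K := by
  obtain ⟨y, hy⟩ := hJ
  exact fun x hx z hz => (hIJ x hx y hy).trans (hJK y hy z hz)

theorem ll_of_lt {I : Fin m → Set O} (hne : ∀ i, (I i).Nonempty)
    (hI : ∀ j : ℕ, ∀ h : j + 1 < m, Ll (I ⟨j, Nat.lt_of_succ_lt h⟩) (I ⟨j + 1, h⟩))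
    {a b : Fin m} (hab : a < b) : Ll (I a) (I b) := by
  obtain ⟨a, ha⟩ := a
  obtain ⟨b, hb⟩ := b
  rw [Fin.mk_lt_mk] at hab
  induction b, hab using Nat.le_induction with
  | base => exact hI a hb
  | succ n hab ih => exact (ih (by omega)).trans (hI n hb) (hne _)

theorem le_of_mem_of_mem_of_lt {J : Fin m → Set O} (hJ : ∀ a b, a < b → Ll (J a) (J b))
    {x y : O} {j k : Fin m} (hx : x ∈ J j) (hy : y ∈ J k) (hxy : x < y) : j ≤ k :=
  not_lt.mp fun hkj => (hJ k j hkj y hy x hx).not_gt hxy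

theorem le_of_mem_of_mem_of_covered {I J : Fin m → Set O} (hIne : ∀ i, (I i).Nonempty)
    (hI : ∀ a b, a < b → Ll (I a) (I b)) (hJ : ∀ a b, a < b → Ll (J a) (J b))
    (hcover : ∀ i, ∀ x ∈ I i, ∃ j, x ∈ J j) (hmin : ∀ i, I i ⊆ J i → I i = J i)
    {i j : Fin m} {x : O} (hxI : x ∈ I i) (hxJ : x ∈ J j) : i ≤ j := by
  obtain ⟨i, hi⟩ := i
  induction i generalizing x j with
  | zero => exact Fin.mk_le_mk.mpr j.val.zero_le
  | succ n ih =>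
    set i : Fin m := ⟨n, by omega⟩
    have hlt : i < ⟨n + 1, hi⟩ := Fin.mk_lt_mk.mpr n.lt_succ_self
    have hbelow : ∀ {z k}, z ∈ I i → z ∈ J k → i ≤ k ∧ k ≤ j := fun hzI hzJ =>
      ⟨ih hzJ (by omega) hzI, le_of_mem_of_mem_of_lt hJ hzJ hxJ (hI _ _ hlt _ hzI _ hxI)⟩
    obtain ⟨y, hy⟩ := hIne i
    obtain ⟨k, hyk⟩ := hcover i y hy
    have hij : i ≤ j := (hbelow hy hyk).1.trans (hbelow hy hyk).2
    refine Fin.mk_le_mk.mpr (hij.lt_of_ne fun hji => ?_)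
    -- If `x ∈ J i`, then `I i` is squeezed into `J i`, hence equals it, and contains `x`.
    have hIJ : I i = J i := hmin i fun z hz => by
      obtain ⟨k, hzk⟩ := hcover i z hz
      obtain ⟨hik, hkj⟩ := hbelow hz hzk
      rwa [le_antisymm (hji ▸ hkj) hik] at hzk
    exact lt_irrefl x (hI _ _ hlt x (hIJ ▸ hji ▸ hxJ) x hxI)

theorem eq_of_iUnion_subset {I J : Fin m → Set O} (hIne : ∀ i, (I i).Nonempty)
    (hI : ∀ a b, a < b → Ll (I a) (I b)) (hJ : ∀ a b, a < b → Ll (J a) (J b))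
    (hmin : ∀ i, I i ⊆ J i → I i = J i) (hsub : ⋃ i, I i ⊆ ⋃ i, J i) : I = J := by
  have hcover : ∀ i, ∀ x ∈ I i, ∃ j, x ∈ J j := fun i x hx =>
    Set.mem_iUnion.mp (hsub (Set.mem_iUnion.mpr ⟨i, hx⟩))
  have hle := @le_of_mem_of_mem_of_covered O _ m I J hIne hI hJ hcover hmin
  -- the reverse inequality, read off for the reversed order and the reversed indexing
  have hge := @le_of_mem_of_mem_of_covered Oᵒᵈ _ m
    (fun i => OrderDual.ofDual ⁻¹' I i.rev) (fun i => OrderDual.ofDual ⁻¹' J i.rev)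
    (fun i => hIne _) (fun a b hab x hx y hy => hI _ _ (Fin.rev_lt_rev.mpr hab) y hy x hx)
    (fun a b hab x hx y hy => hJ _ _ (Fin.rev_lt_rev.mpr hab) y hy x hx)
    (fun i x hx => (hcover _ x hx).imp' Fin.rev fun j hj => by
      rwa [Set.mem_preimage, Fin.rev_rev])
    (fun i h => by simpa using congrArg (OrderDual.ofDual ⁻¹' ·) (hmin _ h))
  funext i
  refine hmin i fun x hx => ?_
  obtain ⟨j, hxj⟩ := hcover i x hx
  have hji : j ≤ i := Fin.rev_le_rev.mp (hge (i := i.rev) (j := j.rev) (x := OrderDual.toDual x)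
    (by simpa using hx) (by simpa using hxj))
  rwa [le_antisymm hji (hle hx hxj)] at hxj

end

theorem stmt10_general {O : Type*} [LinearOrder O] {m : ℕ}
    (A : Fin m → Set (Set O))
    (hint : ∀ i, ∀ X ∈ A i, IsInterval X ∧ X.Nonempty)
    (hanti : ∀ i, IsAntichain (· ⊆ ·) (A i)) :
    IsAntichain (· ⊆ ·)
      {S : Set O | ∃ I : Fin m → Set O, (∀ i, I i ∈ A i) ∧
        (∀ j : ℕ, ∀ h : j + 1 < m, Ll (I ⟨j, Nat.lt_of_succ_lt h⟩) (I ⟨j + 1, h⟩)) ∧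
        IsInterval (⋃ i, I i) ∧ S = ⋃ i, I i} := by
  rintro _ ⟨I, hI, hIll, -, rfl⟩ _ ⟨J, hJ, hJll, -, rfl⟩ hne hsub
  have hIne : ∀ i, (I i).Nonempty := fun i => (hint i _ (hI i)).2
  have hJne : ∀ i, (J i).Nonempty := fun i => (hint i _ (hJ i)).2
  refine hne (congrArg (fun K => ⋃ i, K i) (eq_of_iUnion_subset hIne
    (fun _ _ => ll_of_lt hIne hIll) (fun _ _ => ll_of_lt hJne hJll) (fun i => ?_) hsub))
  exact (hanti i).eq (hI i) (hJ i)

/-- the results of the BLOCK operator (unions `I₀ ∪ ⋯ ∪ I_{m−1}` with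
`I_i ∈ A_i`, `I_{i−1} ≪ I_i`, whose union is an interval) form an antichain under
inclusion. -/
theorem stmt10 {O : Type*} [LinearOrder O] [Fintype O] {m : ℕ}
    (A : Fin m → Set (Set O))
    (hint : ∀ i, ∀ X ∈ A i, IsInterval X ∧ X.Nonempty)
    (hanti : ∀ i, IsAntichain (· ⊆ ·) (A i)) :
    IsAntichain (· ⊆ ·)
      {S : Set O | ∃ I : Fin m → Set O, (∀ i, I i ∈ A i) ∧
        (∀ j : ℕ, ∀ h : j + 1 < m, Ll (I ⟨j, Nat.lt_of_succ_lt h⟩) (I ⟨j + 1, h⟩)) ∧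
        IsInterval (⋃ i, I i) ∧ S = ⋃ i, I i} :=
  stmt10_general A hint hanti
end

section
/- For antichains of intervals A, B, C over a finite totally ordered set, with the Brouwerian difference A − B defined as the set of intervals I ∈ A such that no J ∈ B satisfies J ⊆ I, we have A − B ≤ C if and only if A ≤ B ∨ C, where A ≤ B means every I ∈ A contains some J ∈ B, and B ∨ C is the set of inclusion-minimal intervals of B ∪ C. -/
/-!
If an interval of `A` contains no interval of `B`, it lies in `A − B` and so contains an interval
of `C`; either way it contains an interval of `B ∪ C`, which finiteness lets us shrink to an
inclusion-minimal one, i.e. to an interval of `B ∨ C`. Conversely, an interval of `B ∨ C` inside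
an interval of `A − B` cannot belong to `B`, so it belongs to `C`.
-/

/-- `cont p q`: interval `p` is contained in interval `q` (intervals as pairs
(left extreme, right extreme)). -/
def cont {O : Type*} [LinearOrder O] (p q : O × O) : Prop :=
  q.1 ≤ p.1 ∧ p.2 ≤ q.2

/-- `ale A B`: every interval of `A` contains some interval of `B`. -/
def ale {O : Type*} [LinearOrder O] (A B : Set (O × O)) : Prop :=
  ∀ p ∈ A, ∃ q ∈ B, cont q p

/-- The join `A ∨ B`: inclusion-minimal intervals of `A ∪ B`. -/
def ajoin {O : Type*} [LinearOrder O] (A B : Set (O × O)) : Set (O × O) :=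
  {p ∈ A ∪ B | ∀ q ∈ A ∪ B, cont q p → q = p}

/-- The Brouwerian difference `A − B`: intervals of `A` containing no interval of `B`. -/
def adiff {O : Type*} [LinearOrder O] (A B : Set (O × O)) : Set (O × O) :=
  {p ∈ A | ∀ q ∈ B, ¬ cont q p}

section Intervals

variable {O : Type*} [LinearOrder O]

theorem cont_trans {p q r : O × O} (hpq : cont p q) (hqr : cont q r) : cont p r :=
  ⟨hqr.1.trans hpq.1, hpq.2.trans hqr.2⟩

theorem cont_antisymm {p q : O × O} (hpq : cont p q) (hqp : cont q p) : p = q :=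
  Prod.ext (le_antisymm hqp.1 hpq.1) (le_antisymm hpq.2 hqp.2)

def intervalEquiv : O × O ≃ Oᵒᵈ × O :=
  Equiv.prodCongr OrderDual.toDual (Equiv.refl O)

theorem cont_iff_intervalEquiv_le {p q : O × O} : cont p q ↔ intervalEquiv p ≤ intervalEquiv q :=
  Iff.rfl

theorem Set.Finite.exists_minimal_cont {S : Set (O × O)} (hS : S.Finite) {q : O × O}
    (hq : q ∈ S) : ∃ m ∈ S, cont m q ∧ ∀ r ∈ S, cont r m → r = m := by
  obtain ⟨_, hmq, ⟨m, hm, rfl⟩, hmin⟩ :=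
    (hS.image intervalEquiv).exists_le_minimal (Set.mem_image_of_mem intervalEquiv hq)
  refine ⟨m, hm, cont_iff_intervalEquiv_le.2 hmq, fun r hr hrm => ?_⟩
  exact cont_antisymm hrm <| cont_iff_intervalEquiv_le.2 <|
    hmin (Set.mem_image_of_mem intervalEquiv hr) (cont_iff_intervalEquiv_le.1 hrm)

theorem exists_mem_ajoin_cont {B C : Set (O × O)} (hBC : (B ∪ C).Finite) {q : O × O}
    (hq : q ∈ B ∪ C) : ∃ m ∈ ajoin B C, cont m q := by
  obtain ⟨m, hm, hmq, hmin⟩ := hBC.exists_minimal_cont hq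
  exact ⟨m, ⟨hm, hmin⟩, hmq⟩

end Intervals

theorem stmt11_general {O : Type*} [LinearOrder O] [Fintype O] (A B C : Set (O × O)) :
    ale (adiff A B) C ↔ ale A (ajoin B C) := by
  constructor
  · intro hdiff p hp
    obtain ⟨q, hq, hqp⟩ : ∃ q ∈ B ∪ C, cont q p := by
      by_cases hB : ∃ q ∈ B, cont q p
      · obtain ⟨q, hqB, hqp⟩ := hB
        exact ⟨q, .inl hqB, hqp⟩
      · push Not at hB
        obtain ⟨q, hqC, hqp⟩ := hdiff p ⟨hp, hB⟩
        exact ⟨q, .inr hqC, hqp⟩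
    obtain ⟨m, hm, hmq⟩ := exists_mem_ajoin_cont (Set.toFinite _) hq
    exact ⟨m, hm, cont_trans hmq hqp⟩
  · rintro hjoin p ⟨hpA, hpB⟩
    obtain ⟨q, ⟨hqB | hqC, -⟩, hqp⟩ := hjoin p hpA
    · exact absurd hqp (hpB q hqB)
    · exact ⟨q, hqC, hqp⟩

/-- `A − B ≤ C` iff `A ≤ B ∨ C`. -/
theorem stmt11 {O : Type*} [LinearOrder O] [Fintype O] (A B C : Set (O × O))
    (hA : ∀ p ∈ A, p.1 ≤ p.2) (hB : ∀ p ∈ B, p.1 ≤ p.2) (hC : ∀ p ∈ C, p.1 ≤ p.2)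
    (hAa : IsAntichain (cont (O := O)) A)
    (hBa : IsAntichain (cont (O := O)) B)
    (hCa : IsAntichain (cont (O := O)) C) :
    ale (adiff A B) C ↔ ale A (ajoin B C) :=
  stmt11_general A B C
end

section
/- Let A₀, ..., A_{m−1} be antichains of nonempty intervals over a finite totally ordered set, and let [ℓ..r] be an inclusion-minimal interval among those spanned by tuples in A₀ × ⋯ × A_{m−1}. Then for each i, letting C_i be the set of intervals of A_i contained in [ℓ..r], at least one C_i is a singleton whose unique element has right extreme equal to r. -/
/-- if `[ℓ..r]` is an inclusion-minimal interval among the spans of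
tuples from antichains `A₀ × ⋯ × A_{m−1}` of nonempty intervals, then for some `i`
the set `C_i` of intervals of `A_i` contained in `[ℓ..r]` is a singleton whose unique
element is a right delimiter (has right extreme `r`). -/
theorem stmt13 {O : Type*} [LinearOrder O] [Fintype O] {m : ℕ} [NeZero m]
    (A : Fin m → Set (O × O))
    (hne : ∀ i, ∀ p ∈ A i, p.1 ≤ p.2)
    (hanti : ∀ i, ∀ p ∈ A i, ∀ q ∈ A i, p ≠ q → ¬(q.1 ≤ p.1 ∧ p.2 ≤ q.2))
    (S : Set (O × O))
    (hS : S = {q | ∃ t : Fin m → O × O, (∀ i, t i ∈ A i) ∧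
        (∀ i, q.1 ≤ (t i).1 ∧ (t i).2 ≤ q.2) ∧
        (∃ i, (t i).1 = q.1) ∧ (∃ i, (t i).2 = q.2)})
    (ℓ r : O) (hmem : (ℓ, r) ∈ S)
    (hmin : ∀ q ∈ S, ℓ ≤ q.1 → q.2 ≤ r → q = (ℓ, r)) :
    ∃ i, ∃ p ∈ A i, ℓ ≤ p.1 ∧ p.2 = r ∧
      ∀ p' ∈ A i, ℓ ≤ p'.1 → p'.2 ≤ r → p' = p := by
  by_contra hcon
  push_neg at hcon
  subst hS
  obtain ⟨t, htA, htb, -, -⟩ := hmem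
  have hs : ∀ i, ∃ p ∈ A i, ℓ ≤ p.1 ∧ p.2 < r := by
    intro i
    by_cases hr : ∃ p ∈ A i, ℓ ≤ p.1 ∧ p.2 = r
    · obtain ⟨p, hp, hp1, hp2⟩ := hr
      obtain ⟨q, hq, hq1, hq2, hqp⟩ := hcon i p hp hp1 hp2
      refine ⟨q, hq, hq1, ?_⟩
      rcases lt_or_eq_of_le hq2 with h | h
      · exact h
      · exfalso
        have h1 := hanti i p hp q hq fun e => hqp e.symm
        have h2 := hanti i q hq p hp hqp
        rw [hp2, h] at h1 h2
        have a : ¬ q.1 ≤ p.1 := fun hle => h1 ⟨hle, le_rfl⟩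
        have b : ¬ p.1 ≤ q.1 := fun hle => h2 ⟨hle, le_rfl⟩
        exact b (le_of_not_ge a)
    · refine ⟨t i, htA i, (htb i).1, lt_of_le_of_ne (htb i).2 ?_⟩
      intro h
      exact hr ⟨t i, htA i, (htb i).1, h⟩
  choose s hsA hs1 hs2 using hs
  have hnefin : (Finset.univ : Finset (Fin m)).Nonempty := Finset.univ_nonempty
  set q1 := Finset.univ.inf' hnefin (fun i => (s i).1) with hq1
  set q2 := Finset.univ.sup' hnefin (fun i => (s i).2) with hq2
  have hqS : (q1, q2) ∈ {q : O × O | ∃ t : Fin m → O × O, (∀ i, t i ∈ A i) ∧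
      (∀ i, q.1 ≤ (t i).1 ∧ (t i).2 ≤ q.2) ∧
      (∃ i, (t i).1 = q.1) ∧ (∃ i, (t i).2 = q.2)} := by
    refine ⟨s, hsA, fun i => ⟨Finset.inf'_le _ (Finset.mem_univ i),
      Finset.le_sup' (fun i => (s i).2) (Finset.mem_univ i)⟩, ?_, ?_⟩
    · obtain ⟨i, -, hi⟩ := Finset.exists_mem_eq_inf' hnefin (fun i => (s i).1)
      exact ⟨i, hi.symm⟩
    · obtain ⟨i, -, hi⟩ := Finset.exists_mem_eq_sup' hnefin (fun i => (s i).2)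
      exact ⟨i, hi.symm⟩
  have hq1ℓ : ℓ ≤ q1 := Finset.le_inf' _ _ fun i _ => hs1 i
  have hq2r : q2 < r := Finset.sup'_lt_iff hnefin |>.mpr fun i _ => hs2 i
  have := hmin (q1, q2) hqS hq1ℓ hq2r.le
  exact absurd (congrArg Prod.snd this) hq2r.ne
end

section
/- For an antichain S of nonempty intervals over a finite totally ordered set, and for a minuend interval [ℓ..r], let [ℓ'..r'] be the ⪯-least interval of S satisfying ℓ' ≥ ℓ or r' ≥ r (if it exists), where ⪯ orders intervals by left extreme ascending, right extreme descending. If [ℓ'..r'] is not contained in [ℓ..r], then no interval of S is contained in [ℓ..r]. -/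
/-- let `p = [ℓ'..r']` be the `⪯`-least interval of an antichain `S`
satisfying `ℓ' ≥ ℓ` or `r' ≥ r`. If `p` is not contained in `[ℓ..r]`, then no
interval of `S` is contained in `[ℓ..r]`. -/
theorem stmt16 {O : Type*} [LinearOrder O] [Fintype O] (S : Set (O × O))
    (hne : ∀ p ∈ S, p.1 ≤ p.2)
    (hanti : ∀ p ∈ S, ∀ q ∈ S, p ≠ q → ¬(q.1 ≤ p.1 ∧ p.2 ≤ q.2))
    (ℓ r : O) (hlr : ℓ ≤ r) (p : O × O) (hp : p ∈ S)
    (hcond : ℓ ≤ p.1 ∨ r ≤ p.2)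
    (hleast : ∀ q ∈ S, (ℓ ≤ q.1 ∨ r ≤ q.2) →
      (p.1 < q.1 ∨ (p.1 = q.1 ∧ q.2 ≤ p.2)))
    (hnotc : ¬(ℓ ≤ p.1 ∧ p.2 ≤ r)) :
    ∀ q ∈ S, ¬(ℓ ≤ q.1 ∧ q.2 ≤ r) := by
  rintro q hq ⟨hq1, hq2⟩
  have hle := hleast q hq (Or.inl hq1)
  -- In every case we derive p.1 ≤ q.1, q.2 ≤ p.2, p ≠ q, contradicting the antichain.
  have hcontain : p.1 ≤ q.1 ∧ q.2 ≤ p.2 ∧ p ≠ q := by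
    have hq2p : q.2 ≤ p.2 := by
      rcases le_or_gt p.2 r with h | h
      · -- p.2 ≤ r forces p.1 < ℓ, hence hcond gives r ≤ p.2, so p.2 = r
        have hr : r ≤ p.2 := by
          rcases hcond with hc | hc
          · exact absurd ⟨hc, h⟩ hnotc
          · exact hc
        exact hq2.trans hr
      · exact hq2.trans h.le
    rcases hle with h | ⟨h1, h2⟩
    · refine ⟨h.le, hq2p, fun e => absurd (e ▸ h) (lt_irrefl _)⟩
    · have hr : r < p.2 := by
        rcases lt_or_ge r p.2 with h | h
        · exact h
        · exact absurd ⟨h1 ▸ hq1, h⟩ hnotc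
      exact ⟨h1.le, h2, fun e => absurd (e ▸ hr) (not_lt.mpr hq2)⟩
  exact hanti q hq p hp hcontain.2.2.symm ⟨hcontain.1, hcontain.2.1⟩
end

section
/- Let A₀, ..., A_{m−1} be antichains of nonempty intervals over a finite totally ordered set, and suppose for two tuples (I₀,...,I_{m−1}) and (I'₀,...,I'_{m−1}) in A₀ × ⋯ × A_{m−1}, each satisfying I_{j−1} ≪ I_j and I'_{j−1} ≪ I'_j for all 0 < j < m, the spanned intervals satisfy span(I₀,...,I_{m−1}) = span(I'₀,...,I'_{m−1}), and both tuples are leftmost (for each 0 < j < m, no interval of A_j has left extreme strictly between the right extreme of the (j−1)-th component and the left extreme of the j-th component). Then the tuples are equal. -/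
/-- two leftmost `≪`-chains of intervals (one from each antichain
`A₀, …, A_{m−1}` of nonempty intervals) with equal spans are equal. Intervals are
pairs (left extreme, right extreme); `I ≪ J` for such pairs means the right extreme
of `I` is strictly less than the left extreme of `J`; since the components form a
`≪`-chain, the span's left extreme is the first component's left extreme and the
span's right extreme is the last component's right extreme. -/
theorem stmt17 {O : Type*} [LinearOrder O] [Fintype O] {m : ℕ} [NeZero m]
    (A : Fin m → Set (O × O))
    (hne : ∀ i, ∀ p ∈ A i, p.1 ≤ p.2)
    (hanti : ∀ i, ∀ p ∈ A i, ∀ q ∈ A i, p ≠ q → ¬(q.1 ≤ p.1 ∧ p.2 ≤ q.2))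
    (t t' : Fin m → O × O)
    (ht : ∀ i, t i ∈ A i) (ht' : ∀ i, t' i ∈ A i)
    (hchain : ∀ j : ℕ, ∀ h : j + 1 < m,
      (t ⟨j, Nat.lt_of_succ_lt h⟩).2 < (t ⟨j + 1, h⟩).1)
    (hchain' : ∀ j : ℕ, ∀ h : j + 1 < m,
      (t' ⟨j, Nat.lt_of_succ_lt h⟩).2 < (t' ⟨j + 1, h⟩).1)
    (hleft : ∀ j : ℕ, ∀ h : j + 1 < m, ∀ p ∈ A ⟨j + 1, h⟩,
      ¬((t ⟨j, Nat.lt_of_succ_lt h⟩).2 < p.1 ∧ p.1 < (t ⟨j + 1, h⟩).1))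
    (hleft' : ∀ j : ℕ, ∀ h : j + 1 < m, ∀ p ∈ A ⟨j + 1, h⟩,
      ¬((t' ⟨j, Nat.lt_of_succ_lt h⟩).2 < p.1 ∧ p.1 < (t' ⟨j + 1, h⟩).1))
    (hspanl : (t ⟨0, Nat.pos_of_ne_zero (NeZero.ne m)⟩).1
      = (t' ⟨0, Nat.pos_of_ne_zero (NeZero.ne m)⟩).1)
    (hspanr : (t ⟨m - 1, Nat.sub_lt (Nat.pos_of_ne_zero (NeZero.ne m)) one_pos⟩).2
      = (t' ⟨m - 1, Nat.sub_lt (Nat.pos_of_ne_zero (NeZero.ne m)) one_pos⟩).2) :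
    t = t' := by
  have same : ∀ i : Fin m, ∀ p ∈ A i, ∀ q ∈ A i, p.1 = q.1 → p = q := by
    intro i p hp q hq h
    by_contra hpq
    rcases le_total p.2 q.2 with hle | hle
    · exact hanti i p hp q hq hpq ⟨h.ge, hle⟩
    · exact hanti i q hq p hp (Ne.symm hpq) ⟨h.le, hle⟩
  have key : ∀ j : ℕ, ∀ h : j < m, t ⟨j, h⟩ = t' ⟨j, h⟩ := by
    intro j
    induction j with
    | zero => intro h; exact same _ _ (ht _) _ (ht' _) hspanl
    | succ j ih =>
      intro h
      have hj := ih (Nat.lt_of_succ_lt h)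
      apply same _ _ (ht _) _ (ht' _)
      rcases lt_trichotomy (t ⟨j + 1, h⟩).1 (t' ⟨j + 1, h⟩).1 with hlt | heq | hlt
      · exact absurd ⟨hj ▸ hchain j h, hlt⟩ (hleft' j h _ (ht _))
      · exact heq
      · exact absurd ⟨hj ▸ hchain' j h, hlt⟩ (hleft j h _ (ht' _))
  funext i
  have := key i.1 i.2
  simpa using this
end
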